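/- arXiv:2308.11842 — 2 statements merged into one kernel-verified Lean document; each statement's English description precedes it below -/
import Mathlib

section
/- In a finite G-symmetric MDP, the optimal action-value function is G-invariant: Q*(s,a) = Q*(L_g[s], K_g[a]) for all s, a, g. -/
/-! The Bellman optimality operator `T` is a `γ`-contraction for the sup distance, so it has at
most one fixed point. Symmetry of `P` and `r` makes `T` commute with precomposition by the
action of `g`, hence `(s, a) ↦ Q* (g • s) (g • a)` is again a fixed point of `T` and must be
`Q*` itself. -/

open Finset Function

lemma Real.dist_ciSup_le_dist {ι : Type*} [Fintype ι] [Nonempty ι] (f g : ι → ℝ) :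
    dist (⨆ a, f a) (⨆ a, g a) ≤ dist f g := by
  have key : ∀ f g : ι → ℝ, ⨆ a, f a ≤ (⨆ a, g a) + dist f g := fun f g =>
    ciSup_le fun a => calc
      f a ≤ g a + dist f g := by
        linarith [abs_sub_le_iff.mp ((Real.dist_eq _ _).symm.trans_le (dist_le_pi_dist f g a))]
      _ ≤ (⨆ a, g a) + dist f g := by gcongr; exact le_ciSup (Finite.bddAbove_range g) a
  rw [Real.dist_eq, abs_sub_le_iff]
  constructor
  · linarith [key f g]
  · linarith [key g f, dist_comm f g]

lemma dist_sum_mul_le_of_stochastic {ι : Type*} [Fintype ι] {p : ι → ℝ} (hp : ∀ i, 0 ≤ p i)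
    (hp1 : ∑ i, p i = 1) (x y : ι → ℝ) : dist (∑ i, p i * x i) (∑ i, p i * y i) ≤ dist x y := calc
  dist (∑ i, p i * x i) (∑ i, p i * y i) = |∑ i, p i * (x i - y i)| := by
    simp only [Real.dist_eq, mul_sub, sum_sub_distrib]
  _ ≤ ∑ i, p i * |x i - y i| := by
    refine (abs_sum_le_sum_abs _ _).trans_eq (sum_congr rfl fun i _ => ?_)
    rw [abs_mul, abs_of_nonneg (hp i)]
  _ ≤ ∑ i, p i * dist x y := by
    gcongr with i
    · exact hp i
    · exact (Real.dist_eq _ _).symm.trans_le (dist_le_pi_dist x y i)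
  _ = dist x y := by rw [← sum_mul, hp1, one_mul]

section BellmanOptimality

variable {S A : Type*} [Fintype S]

noncomputable def bellmanOptimality (P : S → A → S → ℝ) (r : S → A → ℝ) (γ : ℝ)
    (Q : S → A → ℝ) : S → A → ℝ :=
  fun s a => r s a + γ * ∑ s', P s a s' * ⨆ a', Q s' a'

lemma dist_bellmanOptimality_le [Fintype A] [Nonempty A] {P : S → A → S → ℝ} (r : S → A → ℝ)
    {γ : ℝ} (hγ : 0 ≤ γ) (hPnn : ∀ s a s', 0 ≤ P s a s') (hPsum : ∀ s a, ∑ s', P s a s' = 1)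
    (Q Q' : S → A → ℝ) :
    dist (bellmanOptimality P r γ Q) (bellmanOptimality P r γ Q') ≤ γ * dist Q Q' := by
  have hV : dist (fun s => ⨆ a, Q s a) (fun s => ⨆ a, Q' s a) ≤ dist Q Q' :=
    (dist_pi_le_iff dist_nonneg).2 fun s =>
      (Real.dist_ciSup_le_dist _ _).trans (dist_le_pi_dist Q Q' s)
  refine (dist_pi_le_iff (by positivity)).2 fun s =>
    (dist_pi_le_iff (by positivity)).2 fun a => ?_
  calc dist (bellmanOptimality P r γ Q s a) (bellmanOptimality P r γ Q' s a)
      = γ * dist (∑ s', P s a s' * ⨆ a', Q s' a') (∑ s', P s a s' * ⨆ a', Q' s' a') := by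
        simp only [bellmanOptimality, dist_add_left, Real.dist_eq, ← mul_sub, abs_mul,
          abs_of_nonneg hγ]
    _ ≤ γ * dist Q Q' := by
        gcongr
        exact (dist_sum_mul_le_of_stochastic (hPnn s a) (hPsum s a) _ _).trans hV

lemma contractingWith_bellmanOptimality [Fintype A] [Nonempty A] {P : S → A → S → ℝ}
    (r : S → A → ℝ) {γ : ℝ} (hγ0 : 0 ≤ γ) (hγ1 : γ < 1) (hPnn : ∀ s a s', 0 ≤ P s a s')
    (hPsum : ∀ s a, ∑ s', P s a s' = 1) :
    ContractingWith γ.toNNReal (bellmanOptimality P r γ) :=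
  ⟨Real.toNNReal_lt_one.2 hγ1,
    LipschitzWith.of_dist_le' (dist_bellmanOptimality_le r hγ0 hPnn hPsum)⟩

variable {G : Type*} [Group G] [MulAction G S] [MulAction G A]

def precompSMul (g : G) (Q : S → A → ℝ) : S → A → ℝ := fun s a => Q (g • s) (g • a)

lemma bellmanOptimality_precompSMul {P : S → A → S → ℝ} {r : S → A → ℝ} (γ : ℝ) {g : G}
    (hP : ∀ s a s', P s a s' = P (g • s) (g • a) (g • s')) (hr : ∀ s a, r s a = r (g • s) (g • a))
    (Q : S → A → ℝ) :
    bellmanOptimality P r γ (precompSMul g Q) = precompSMul g (bellmanOptimality P r γ Q) := by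
  funext s a
  have hV : ∀ s', ⨆ a', Q (g • s') (g • a') = ⨆ a', Q (g • s') a' := fun s' =>
    Equiv.iSup_comp (g := Q (g • s')) (MulAction.toPerm g)
  simp only [bellmanOptimality, precompSMul, hV, hr s a]
  congr 2
  exact Fintype.sum_equiv (MulAction.toPerm g) _ _ fun s' => by
    rw [hP s a s', MulAction.toPerm_apply]

end BellmanOptimality

theorem stmt_4 {S A G : Type*} [Fintype S] [Fintype A] [Nonempty A] [Group G]
    [MulAction G S] [MulAction G A]
    (P : S → A → S → ℝ) (r : S → A → ℝ) (γ : ℝ)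
    (hγ0 : 0 ≤ γ) (hγ1 : γ < 1)
    (hPnn : ∀ s a s', 0 ≤ P s a s') (hPsum : ∀ s a, ∑ s', P s a s' = 1)
    (hP : ∀ (s : S) (a : A) (s' : S) (g : G), P s a s' = P (g • s) (g • a) (g • s'))
    (hr : ∀ (s : S) (a : A) (g : G), r s a = r (g • s) (g • a))
    (Q : S → A → ℝ)
    (hQ : ∀ s a, Q s a = r s a + γ * ∑ s', P s a s' * (⨆ a' : A, Q s' a'))
    (s : S) (a : A) (g : G) : Q s a = Q (g • s) (g • a) := by
  have hfix : IsFixedPt (bellmanOptimality P r γ) Q := funext₂ fun t b => (hQ t b).symm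
  have hfix_precomp : IsFixedPt (bellmanOptimality P r γ) (precompSMul g Q) := by
    rw [IsFixedPt, bellmanOptimality_precompSMul γ (hP · · · g) (hr · · g), hfix.eq]
  exact congrFun₂
    ((contractingWith_bellmanOptimality r hγ0 hγ1 hPnn hPsum).fixedPoint_unique' hfix
      hfix_precomp) s a
end

section
/- For a finite group G acting on finite sets S and A, the set of G-invariant bounded real functions Q: S × A → ℝ (those with Q(s,a) = Q(L_g[s],K_g[a]) for all g) is a closed linear subspace of the sup-norm space of all functions S × A → ℝ, and is preserved by the Bellman optimality operator of any G-symmetric MDP on (S, A). -/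
/-! Invariance is a family of equations between coordinate evaluations, so the invariant
functions form a closed subspace. The Bellman operator preserves it because each `g` permutes
the actions (leaving `⨆ a', Q (s', a')` unchanged) and the next states (so the expectation
over `s'` is a reindexed sum). -/

section InvariantFunctions

variable (G : Type*) {X : Type*} [Group G] [MulAction G X]

def invariantFunctions (R M : Type*) [Semiring R] [AddCommMonoid M] [Module R M] :
    Submodule R (X → M) where
  carrier := {Q | ∀ (g : G) (x : X), Q x = Q (g • x)}
  add_mem' hQ hQ' g x := by simp only [Pi.add_apply, hQ g x, hQ' g x]
  zero_mem' _ _ := rfl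
  smul_mem' c _ hQ g x := by simp only [Pi.smul_apply, hQ g x]

variable {G}

theorem isClosed_invariantFunctions (R M : Type*) [Semiring R] [AddCommMonoid M] [Module R M]
    [TopologicalSpace M] [T2Space M] :
    IsClosed ((invariantFunctions G R M : Submodule R (X → M)) : Set (X → M)) := by
  simp only [invariantFunctions, Submodule.coe_set_mk, AddSubmonoid.coe_set_mk,
    AddSubsemigroup.coe_set_mk, Set.ofPred_forall]
  exact isClosed_iInter fun g => isClosed_iInter fun x =>
    isClosed_eq (continuous_apply x) (continuous_apply (g • x))

end InvariantFunctions

section Bellman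

variable {S A G : Type*} [Group G] [MulAction G S] [MulAction G A]

theorem iSup_snd_smul_eq {α : Type*} [SupSet α] {Q : S × A → α}
    (hQ : ∀ (g : G) (p : S × A), Q p = Q (g • p)) (g : G) (s : S) :
    ⨆ a, Q (g • s, a) = ⨆ a, Q (s, a) := by
  rw [← (MulAction.toPerm g : Equiv.Perm A).iSup_comp]
  exact iSup_congr fun a => (hQ g (s, a)).symm

theorem sum_comp_smul_mul_eq_of_invariant [Fintype S] {R : Type*} [NonUnitalNonAssocSemiring R]
    {V : S → R} (g : G) (hV : ∀ s, V (g • s) = V s) (K : S → R) :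
    ∑ s, K (g • s) * V s = ∑ s, K s * V s := by
  rw [← Equiv.sum_comp (MulAction.toPerm g) (fun s => K s * V s)]
  simp only [MulAction.toPerm_apply, hV]

variable [Fintype S]

noncomputable def bellmanOperator (P : S → A → S → ℝ) (r : S → A → ℝ) (γ : ℝ) (Q : S × A → ℝ) :
    S × A → ℝ :=
  fun p => r p.1 p.2 + γ * ∑ s', P p.1 p.2 s' * ⨆ a', Q (s', a')

theorem bellmanOperator_mem_invariantFunctions {P : S → A → S → ℝ} {r : S → A → ℝ}
    (γ : ℝ) (hP : ∀ (s : S) (a : A) (s' : S) (g : G), P s a s' = P (g • s) (g • a) (g • s'))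
    (hr : ∀ (s : S) (a : A) (g : G), r s a = r (g • s) (g • a)) {Q : S × A → ℝ}
    (hQ : Q ∈ invariantFunctions G ℝ ℝ) :
    bellmanOperator P r γ Q ∈ invariantFunctions G ℝ ℝ := by
  rintro g ⟨s, a⟩
  have hsum := sum_comp_smul_mul_eq_of_invariant (V := fun s' => ⨆ a', Q (s', a')) g
    (iSup_snd_smul_eq hQ g) (P (g • s) (g • a))
  simp only [← hP s a] at hsum
  simp only [bellmanOperator, Prod.smul_mk, ← hsum, ← hr s a g]

end Bellman

theorem stmt_19_general {S A G : Type*} [Fintype S]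
    [Group G] [MulAction G S] [MulAction G A]
    (P : S → A → S → ℝ) (r : S → A → ℝ) (γ : ℝ)
    (hP : ∀ (s : S) (a : A) (s' : S) (g : G), P s a s' = P (g • s) (g • a) (g • s'))
    (hr : ∀ (s : S) (a : A) (g : G), r s a = r (g • s) (g • a)) :
    ∃ W : Submodule ℝ ((S × A) → ℝ),
      (↑W = {Q : (S × A) → ℝ | ∀ (g : G) (s : S) (a : A), Q (s, a) = Q (g • s, g • a)}) ∧
      IsClosed (W : Set ((S × A) → ℝ)) ∧
      (∀ Q ∈ W,
        (fun p : S × A => r p.1 p.2 + γ * ∑ s', P p.1 p.2 s' * ⨆ a' : A, Q (s', a')) ∈ W) :=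
  ⟨invariantFunctions G ℝ ℝ,
    Set.ext fun _ => forall_congr' fun _ => Prod.forall,
    isClosed_invariantFunctions (X := S × A) ℝ ℝ,
    fun _ hQ => bellmanOperator_mem_invariantFunctions γ hP hr hQ⟩

theorem stmt_19 {S A G : Type*} [Fintype S] [Fintype A] [Nonempty A]
    [Group G] [Finite G] [MulAction G S] [MulAction G A]
    (P : S → A → S → ℝ) (r : S → A → ℝ) (γ : ℝ)
    (hγ0 : 0 ≤ γ) (hγ1 : γ < 1)
    (hP : ∀ (s : S) (a : A) (s' : S) (g : G), P s a s' = P (g • s) (g • a) (g • s'))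
    (hr : ∀ (s : S) (a : A) (g : G), r s a = r (g • s) (g • a)) :
    ∃ W : Submodule ℝ ((S × A) → ℝ),
      (↑W = {Q : (S × A) → ℝ | ∀ (g : G) (s : S) (a : A), Q (s, a) = Q (g • s, g • a)}) ∧
      IsClosed (W : Set ((S × A) → ℝ)) ∧
      (∀ Q ∈ W,
        (fun p : S × A => r p.1 p.2 + γ * ∑ s', P p.1 p.2 s' * ⨆ a' : A, Q (s', a')) ∈ W) :=
  stmt_19_general P r γ hP hr
end
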